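/- Let 𝔸 be a finite idempotent algebra and let B be a subset with ∅ ≠ B ⊊ A such that ⟨A^n \ (A \ B)^n⟩_𝔸 ≠ A^n for every n. Then there exists C ⊊ A with B ⊆ C such that A^n \ (A \ C)^n ∈ Inv(𝔸) for every n. -/

import Mathlib

/-- An algebra: a carrier type `A` together with an indexed family of finitary operations. -/
structure MyAlgebra (A : Type) where
  ι : Type
  arity : ι → ℕ
  op : ∀ i : ι, (Fin (arity i) → A) → A

namespace MyAlgebra

variable {A : Type}

/-- A set of `n`-tuples is closed under coordinatewise application of all operations. -/
def Closed (𝔸 : MyAlgebra A) {n : ℕ} (S : Set (Fin n → A)) : Prop :=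
  ∀ i : 𝔸.ι, ∀ γ : Fin (𝔸.arity i) → (Fin n → A),
    (∀ j, γ j ∈ S) → (fun t : Fin n => 𝔸.op i (fun j => γ j t)) ∈ S

/-- The subalgebra of `𝔸^n` generated by `X`. -/
def gen (𝔸 : MyAlgebra A) {n : ℕ} (X : Set (Fin n → A)) : Set (Fin n → A) :=
  ⋂₀ {S : Set (Fin n → A) | X ⊆ S ∧ 𝔸.Closed S}

/-- Polynomially generated powers. -/
def PGP (𝔸 : MyAlgebra A) : Prop :=
  ∃ p : Polynomial ℕ, ∀ n : ℕ, ∃ X : Finset (Fin n → A),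
    X.card ≤ p.eval n ∧ 𝔸.gen (X : Set (Fin n → A)) = Set.univ

/-- Exponentially generated powers. -/
def EGP (𝔸 : MyAlgebra A) : Prop :=
  ∃ b C : ℝ, 1 < b ∧ 0 < C ∧ ∀ n : ℕ, ∀ X : Finset (Fin n → A),
    𝔸.gen (X : Set (Fin n → A)) = Set.univ → C * b ^ n ≤ (X.card : ℝ)

/-- Every operation is idempotent. -/
def Idempotent (𝔸 : MyAlgebra A) : Prop :=
  ∀ i : 𝔸.ι, ∀ a : A, 𝔸.op i (fun _ => a) = a

end MyAlgebra

/-- The number of switches of a tuple: indices `i` with `a i ≠ a (i+1)`,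
encoded as pairs of consecutive indices. -/
def numSwitches {A : Type} [DecidableEq A] {n : ℕ} (a : Fin n → A) : ℕ :=
  (Finset.univ.filter (fun p : Fin n × Fin n =>
    (p.2 : ℕ) = (p.1 : ℕ) + 1 ∧ a p.1 ≠ a p.2)).card

/-- `𝔸` is switchable: for some `r`, every power is generated by tuples with at most `r` switches. -/
def MyAlgebra.Switchable {A : Type} [DecidableEq A] (𝔸 : MyAlgebra A) : Prop :=
  ∃ r : ℕ, ∀ n : ℕ, 𝔸.gen {a : Fin n → A | numSwitches a ≤ r} = Set.univ

/-- A nice relation: not full, and contains every tuple with two equal consecutive entries. -/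
def Nice {A : Type} {m : ℕ} (ρ : Set (Fin m → A)) : Prop :=
  ρ ≠ Set.univ ∧ ∀ c : Fin m → A,
    (∃ i : ℕ, ∃ h : i + 1 < m, c ⟨i, by omega⟩ = c ⟨i + 1, h⟩) → c ∈ ρ

/-- `D_{A,m}`: tuples of length `2m` where some pair `(a_{2i+1}, a_{2i+2})` is equal. -/
def Drel (A : Type) (m : ℕ) : Set (Fin (2 * m) → A) :=
  {a | ∃ i : ℕ, ∃ h : 2 * i + 1 < 2 * m, a ⟨2 * i, by omega⟩ = a ⟨2 * i + 1, h⟩}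

/-- `f` preserves the relation `σ`. -/
def Preserves {A : Type} {s m : ℕ} (f : (Fin s → A) → A) (σ : Set (Fin m → A)) : Prop :=
  ∀ γ : Fin s → (Fin m → A), (∀ j, γ j ∈ σ) → (fun t : Fin m => f (fun j => γ j t)) ∈ σ

/-- `f` is `αβ`-projective. -/
def ABProjective {A : Type} (α β : Set A) {s : ℕ} (f : (Fin s → A) → A) : Prop :=
  ∃ j : Fin s, ∀ a : Fin s → A, ∀ S ∈ ({α, β} : Set (Set A)), a j ∈ S → f a ∈ S

/-- `σ_n(x₁,…,x_{2n}) ⇔ ρ(x₁,x₂) ∨ … ∨ ρ(x_{2n-1},x_{2n})`. -/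
def sigmaRel {A : Type} (ρ : Set (A × A)) (n : ℕ) : Set (Fin (2 * n) → A) :=
  {t | ∃ i : ℕ, ∃ h : 2 * i + 1 < 2 * n, (t ⟨2 * i, by omega⟩, t ⟨2 * i + 1, h⟩) ∈ ρ}


/-!
Take `C ⊇ B` maximal such that the tuples meeting `C` never generate a full power (`A` is finite).
If some generated `b ∈ Aⁿ` avoided `C`, then, by idempotency, every tuple containing `b` as a
subpattern would be generated too. Maximality of `C` lets us delete the entries of `b` one at a
time: if the tuples meeting `C ∪ {d}` generate `A^m₀`, planting `m₀` fresh coordinates shows that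
a pattern `(d, c)` can be shortened to `c`, at the cost of longer tuples. The empty pattern is
contained in every tuple, so some power would be generated after all.
-/

open Function Filter Set

namespace MyAlgebra

variable {A : Type} (𝔸 : MyAlgebra A) {n : ℕ}

theorem subset_gen (X : Set (Fin n → A)) : X ⊆ 𝔸.gen X :=
  fun _ hx _ hS => hS.1 hx

theorem gen_subset {X S : Set (Fin n → A)} (hXS : X ⊆ S) (hS : 𝔸.Closed S) : 𝔸.gen X ⊆ S :=
  sInter_subset_of_mem ⟨hXS, hS⟩

theorem closed_gen (X : Set (Fin n → A)) : 𝔸.Closed (𝔸.gen X) :=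
  fun i γ hγ _ hS => hS.2 i γ fun j => hγ j _ hS

variable {𝔸}

/-- Planting the coordinates of `v` along `e` into a fixed background `t` commutes with the
operations, since they fix the constant background coordinates. -/
theorem Closed.preimage_extend (hid : 𝔸.Idempotent) {m : ℕ} {S : Set (Fin m → A)}
    (hS : 𝔸.Closed S) (e : Fin n → Fin m) (t : Fin m → A) :
    𝔸.Closed ((fun v => extend e v t) ⁻¹' S) := by
  intro i γ hγ
  have hcomm : extend e (fun l => 𝔸.op i fun j => γ j l) t =
      fun q => 𝔸.op i fun j => extend e (γ j) t q := by
    funext q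
    by_cases hq : ∃ l, e l = q
    · simp only [extend_def, dif_pos hq]
    · simp only [extend_apply' _ _ _ hq]
      exact (hid i (t q)).symm
  rw [mem_preimage, hcomm]
  exact hS i _ hγ

end MyAlgebra

theorem Function.extend_comp_self {α β γ : Type*} {f : α → β} (hf : Injective f) (g : β → γ) :
    extend f (g ∘ f) g = g := by
  funext b
  by_cases hb : ∃ a, f a = b
  · obtain ⟨a, rfl⟩ := hb
    exact hf.extend_apply _ _ a
  · exact extend_apply' _ _ _ hb

theorem Function.exists_injective_forall_ne {α β γ : Type*} [Fintype α] [Fintype β] [Fintype γ]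
    {p : β → γ} (hp : Injective p) (h : Fintype.card α + Fintype.card β ≤ Fintype.card γ) :
    ∃ e : α → γ, Injective e ∧ ∀ a b, e a ≠ p b := by
  classical
  have hcard : Fintype.card α ≤ Fintype.card ((range p)ᶜ : Set γ) := by
    rw [Fintype.card_compl_set, Set.card_range_of_injective hp]
    omega
  obtain ⟨f⟩ := Function.Embedding.nonempty_of_card_le hcard
  exact ⟨Subtype.val ∘ f, Subtype.val_injective.comp f.injective,
    fun a b hab => (f a).2 ⟨b, hab.symm⟩⟩

namespace MyAlgebra

variable {A : Type} {𝔸 : MyAlgebra A}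

/-- `Aⁿ \ (A \ C)ⁿ`. -/
def tuplesMeeting (C : Set A) (n : ℕ) : Set (Fin n → A) := {t | ∃ i, t i ∈ C}

theorem extend_mem_gen_tuplesMeeting (hid : 𝔸.Idempotent) {C : Set A} {n m : ℕ}
    {p : Fin n → Fin m} (hp : Injective p) {b : Fin n → A}
    (hb : b ∈ 𝔸.gen (tuplesMeeting C n)) (t : Fin m → A) :
    extend p b t ∈ 𝔸.gen (tuplesMeeting C m) := by
  refine 𝔸.gen_subset (S := (fun v => extend p v t) ⁻¹' 𝔸.gen (tuplesMeeting C m)) ?_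
    ((𝔸.closed_gen _).preimage_extend hid p t) hb
  rintro v ⟨i, hi⟩
  exact 𝔸.subset_gen _ ⟨p i, show extend p v t (p i) ∈ C by rwa [hp.extend_apply]⟩

/-- `extend p c t` ranges over all `m`-tuples containing the pattern `c` at the positions `p`. -/
def ExtensionsGenerated (𝔸 : MyAlgebra A) (C : Set A) {k : ℕ} (c : Fin k → A) (m : ℕ) : Prop :=
  ∀ p : Fin k → Fin m, Injective p → ∀ t, extend p c t ∈ 𝔸.gen (tuplesMeeting C m)

theorem ExtensionsGenerated.tail (hid : 𝔸.Idempotent) {C : Set A} {k m₀ m : ℕ}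
    {c : Fin (k + 1) → A} (hc : ExtensionsGenerated 𝔸 C c m)
    (hfull : 𝔸.gen (tuplesMeeting (insert (c 0) C) m₀) = univ) (hm : m₀ + k ≤ m) :
    ExtensionsGenerated 𝔸 C (Fin.tail c) m := by
  intro p hp t
  set s := extend p (Fin.tail c) t
  obtain ⟨e, he, hep⟩ := exists_injective_forall_ne (α := Fin m₀) hp (by simpa using hm)
  suffices univ ⊆ (fun v => extend e v s) ⁻¹' 𝔸.gen (tuplesMeeting C m) by
    simpa only [mem_preimage, extend_comp_self he] using this (mem_univ (s ∘ e))
  rw [← hfull]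
  refine 𝔸.gen_subset ?_ ((𝔸.closed_gen _).preimage_extend hid e s)
  rintro v ⟨j, hj | hj⟩
  · have hq : Injective (Fin.cons (e j) p : Fin (k + 1) → Fin m) :=
      Fin.cons_injective_iff.2 ⟨fun ⟨l, hl⟩ => hep j l hl.symm, hp⟩
    have hpattern : extend e v s ∘ Fin.cons (e j) p = c := by
      funext l
      refine Fin.cases ?_ (fun l => ?_) l
      · simp [he.extend_apply, hj]
      · have hl : ¬∃ a, e a = p l := fun ⟨a, ha⟩ => hep a l ha
        simp [extend_apply' _ _ _ hl, s, hp.extend_apply, Fin.tail]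
    rw [mem_preimage, ← extend_comp_self hq (extend e v s), hpattern]
    exact hc _ hq (extend e v s)
  · exact 𝔸.subset_gen _ ⟨e j, show extend e v s (e j) ∈ C by rwa [he.extend_apply]⟩

theorem not_eventually_extensionsGenerated (hid : 𝔸.Idempotent) {C : Set A}
    (hC : ∀ n, 𝔸.gen (tuplesMeeting C n) ≠ univ)
    (hmax : ∀ d ∉ C, ∃ m₀, 𝔸.gen (tuplesMeeting (insert d C) m₀) = univ) :
    ∀ {k : ℕ} (c : Fin k → A), (∀ j, c j ∉ C) → ¬∀ᶠ m in atTop, ExtensionsGenerated 𝔸 C c m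
  | 0, c, _, hc => by
    obtain ⟨m, hm⟩ := hc.exists
    refine hC m (eq_univ_of_forall fun t => ?_)
    have hextend : extend Fin.elim0 c t = t :=
      funext fun _ => extend_apply' _ _ _ fun ⟨a, _⟩ => a.elim0
    simpa only [hextend] using hm Fin.elim0 (fun a => a.elim0) t
  | k + 1, c, hcC, hc => by
    obtain ⟨m₀, hm₀⟩ := hmax (c 0) (hcC 0)
    exact not_eventually_extensionsGenerated hid hC hmax (Fin.tail c) (fun j => hcC j.succ)
      ((hc.and (eventually_ge_atTop (m₀ + k))).mono fun _ h => h.1.tail hid hm₀ h.2)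

theorem gen_tuplesMeeting_subset (hid : 𝔸.Idempotent) {C : Set A}
    (hC : ∀ n, 𝔸.gen (tuplesMeeting C n) ≠ univ)
    (hmax : ∀ d ∉ C, ∃ m₀, 𝔸.gen (tuplesMeeting (insert d C) m₀) = univ) (n : ℕ) :
    𝔸.gen (tuplesMeeting C n) ⊆ tuplesMeeting C n := by
  intro b hb
  by_contra hbC
  exact not_eventually_extensionsGenerated hid hC hmax b (fun i hi => hbC ⟨i, hi⟩)
    (Eventually.of_forall fun _ _ hp t => extend_mem_gen_tuplesMeeting hid hp hb t)

end MyAlgebra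

open MyAlgebra in
theorem stmt_12_general {A : Type} [Fintype A] (𝔸 : MyAlgebra A) (hid : 𝔸.Idempotent)
    (B : Set A)
    (h : ∀ n : ℕ, 𝔸.gen {t : Fin n → A | ∃ i, t i ∈ B} ≠ Set.univ) :
    ∃ C : Set A, C ≠ Set.univ ∧ B ⊆ C ∧
      ∀ n : ℕ, 𝔸.Closed {t : Fin n → A | ∃ i, t i ∈ C} := by
  obtain ⟨C, hBC, hC, hCmax⟩ :=
    Finite.exists_le_maximal (p := fun C : Set A => ∀ n, 𝔸.gen (tuplesMeeting C n) ≠ univ) h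
  have hmax : ∀ d ∉ C, ∃ m₀, 𝔸.gen (tuplesMeeting (insert d C) m₀) = univ := by
    intro d hd
    by_contra! hd'
    exact hd (hCmax hd' (subset_insert d C) (mem_insert d C))
  refine ⟨C, ?_, hBC, fun n => ?_⟩
  · rintro rfl
    exact hC 1 (eq_univ_of_forall fun _ => 𝔸.subset_gen _ ⟨0, mem_univ _⟩)
  · have hgen := (gen_tuplesMeeting_subset hid hC hmax n).antisymm (𝔸.subset_gen _)
    change 𝔸.Closed (tuplesMeeting C n)
    exact hgen ▸ 𝔸.closed_gen _

/-- for a finite idempotent algebra, if the sets of tuples with at least one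
coordinate in `B` never generate the full power, then `B` extends to a proper `C ⊊ A` such
that all the relations "some coordinate lies in `C`" are invariant. -/
theorem stmt_12 {A : Type} [Fintype A] (𝔸 : MyAlgebra A) (hid : 𝔸.Idempotent)
    (B : Set A) (hB1 : B.Nonempty) (hB2 : B ≠ Set.univ)
    (h : ∀ n : ℕ, 𝔸.gen {t : Fin n → A | ∃ i, t i ∈ B} ≠ Set.univ) :
    ∃ C : Set A, C ≠ Set.univ ∧ B ⊆ C ∧
      ∀ n : ℕ, 𝔸.Closed {t : Fin n → A | ∃ i, t i ∈ C} :=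
  stmt_12_general 𝔸 hid B h
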